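/- arXiv:2305.17757 — 4 statements merged into one kernel-verified Lean document; each statement's English description precedes it below -/
import Mathlib

section
/- In a diversity-seeking jump game on a δ-regular graph (δ ≥ 2) with exactly one empty node and no stubborn agents, any improving move strictly decreases the potential function Φ defined by edge weights 1 (same-type endpoints), m (one endpoint empty, for fixed 0 < m < 1), and 0 (different-type endpoints). Specifically, if an agent moves from a node where it has x₀ same-type neighbors to a node where it has x₁ same-type neighbors, then Φ(C₁) − Φ(C₀) = x₁ − x₀, i.e. the change in Φ equals (number of same-type neighbors at the new node) minus (number of same-type neighbors at the old node), which is negative for an improving move. -/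
open Finset

variable {V τ : Type}

open Classical in
noncomputable def occNbrs [Fintype V] (G : SimpleGraph V) (C : V → Option τ) (v : V) :
    Finset V :=
  Finset.univ.filter (fun u => G.Adj v u ∧ (C u).isSome)

open Classical in
noncomputable def diffNbrs [Fintype V] (G : SimpleGraph V) (C : V → Option τ) (v : V)
    (t : τ) : Finset V :=
  Finset.univ.filter (fun u => G.Adj v u ∧ ∃ s, C u = some s ∧ s ≠ t)

/-- Utility of the agent at node `v`: fraction of occupied neighbors of different type. -/
noncomputable def util [Fintype V] (G : SimpleGraph V) (C : V → Option τ) (v : V) : ℚ :=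
  match C v with
  | none => 0
  | some t =>
      if (occNbrs G C v).card = 0 then 0
      else ((diffNbrs G C v t).card : ℚ) / ((occNbrs G C v).card : ℚ)

/-- The assignment after the agent at `u` jumps to node `w`. -/
def move [DecidableEq V] (C : V → Option τ) (u w : V) : V → Option τ :=
  fun x => if x = w then C u else if x = u then none else C x

/-- An improving move: the agent at `u` jumps to the empty node `w`, strictly increasing
its utility. -/
def Improves [Fintype V] [DecidableEq V] (G : SimpleGraph V) (C : V → Option τ)
    (u w : V) : Prop :=
  (C u).isSome ∧ C w = none ∧ util G C u < util G (move C u w) w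

/-- Pure Nash equilibrium: no agent can strictly improve by jumping to an empty node. -/
def IsEquil [Fintype V] [DecidableEq V] (G : SimpleGraph V) (C : V → Option τ) : Prop :=
  ∀ u w : V, (C u).isSome → C w = none → util G (move C u w) w ≤ util G C u

/-- Social welfare: sum of agents' utilities. -/
noncomputable def SW [Fintype V] (G : SimpleGraph V) (C : V → Option τ) : ℚ :=
  ∑ v, util G C v

open Classical in
noncomputable def pw (C : V → Option τ) (m : ℚ) (u v : V) : ℚ :=
  if (C u).isNone ∨ (C v).isNone then m
  else if C u = C v then 1 else 0

open Classical in
/-- The potential function: sum over edges, weight 1 for same-type endpoints,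
`m` if an endpoint is unoccupied, 0 for different-type endpoints. -/
noncomputable def potential [Fintype V] (G : SimpleGraph V) (C : V → Option τ)
    (m : ℚ) : ℚ :=
  (∑ p : V × V, if G.Adj p.1 p.2 then pw C m p.1 p.2 else 0) / 2

open Classical in
noncomputable def countType [Fintype V] (C : V → Option τ) (t : τ) : ℕ :=
  (Finset.univ.filter (fun v => C v = some t)).card

open Classical in
noncomputable def emptyCount [Fintype V] (C : V → Option τ) : ℕ :=
  (Finset.univ.filter (fun v => C v = none)).card

open Classical in
noncomputable def sameNbrs {V τ : Type} [Fintype V] (G : SimpleGraph V)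
    (C : V → Option τ) (v : V) (t : τ) : Finset V :=
  Finset.univ.filter (fun u => G.Adj v u ∧ C u = some t)

section AuxLemmas

open Classical in
lemma sum_ite_m [Fintype V] (G : SimpleGraph V) (δ : ℕ) (hreg : G.IsRegularOfDegree δ)
    (m : ℚ) (z : V) : (∑ b : V, if G.Adj z b then m else 0) = δ * m := by
  rw [Finset.sum_ite, Finset.sum_const, Finset.sum_const_zero, add_zero, nsmul_eq_mul]
  congr 1
  rw [show (Finset.univ.filter (fun b => G.Adj z b)) = G.neighborFinset z from
    (SimpleGraph.neighborFinset_eq_filter G).symm]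
  exact_mod_cast hreg z

open Classical in
lemma pot_eq [Fintype V] (G : SimpleGraph V) (δ : ℕ)
    (hreg : G.IsRegularOfDegree δ) (m : ℚ) (D : V → Option τ) (z : V)
    (hz : ∀ x, D x = none ↔ x = z) :
    potential G D m = ((δ:ℚ) * m * 2 + ∑ p : V × V,
      if G.Adj p.1 p.2 ∧ (D p.1).isSome ∧ D p.1 = D p.2 then (1:ℚ) else 0) / 2 := by
  unfold potential
  congr 1
  have key : ∀ a b : V, (if G.Adj a b then pw D m a b else 0) =
      ((if a = z ∧ G.Adj a b then m else 0) + (if b = z ∧ G.Adj a b then m else 0))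
      + (if G.Adj a b ∧ (D a).isSome ∧ D a = D b then (1:ℚ) else 0) := by
    intro a b
    by_cases hab : G.Adj a b
    · have hne : a ≠ b := G.ne_of_adj hab
      by_cases ha : a = z <;> by_cases hb : b = z
      · exact absurd (ha.trans hb.symm) hne
      · subst ha
        have h1 : D a = none := (hz a).mpr rfl
        simp [pw, hab, h1, hb]
      · subst hb
        have h1 : D b = none := (hz b).mpr rfl
        have h2 : D a ≠ none := fun hh => ha ((hz a).mp hh)
        have h3 : ¬ (D a = D b) := by rw [h1]; exact h2
        simp [pw, hab, h1, h2, h3, ha]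
      · have h1 : D a ≠ none := fun hh => ha ((hz a).mp hh)
        have h2 : D b ≠ none := fun hh => hb ((hz b).mp hh)
        simp [pw, hab, ha, hb, Option.isNone_iff_eq_none, h1, h2,
          Option.isSome_iff_ne_none]
    · simp [hab]
  rw [Finset.sum_congr rfl (fun p _ => key p.1 p.2), Finset.sum_add_distrib,
    Finset.sum_add_distrib]
  congr 1
  have e1 : (∑ p : V × V, if p.1 = z ∧ G.Adj p.1 p.2 then m else 0) = (δ:ℚ) * m := by
    rw [Fintype.sum_prod_type]
    have : ∀ a : V, (∑ b : V, if a = z ∧ G.Adj a b then m else 0)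
        = if a = z then (δ:ℚ) * m else 0 := by
      intro a
      by_cases ha : a = z
      · subst ha
        simpa using sum_ite_m G δ hreg m a
      · simp [ha]
    rw [Finset.sum_congr rfl (fun a _ => this a)]
    simp
  have e2 : (∑ p : V × V, if p.2 = z ∧ G.Adj p.1 p.2 then m else 0) = (δ:ℚ) * m := by
    rw [Fintype.sum_prod_type]
    have inner : ∀ a : V, (∑ b : V, if b = z ∧ G.Adj a b then m else 0)
        = if G.Adj z a then m else 0 := by
      intro a
      rw [show (∑ b : V, if b = z ∧ G.Adj a b then m else 0)
          = ∑ b : V, if b = z then (if G.Adj a b then m else 0) else 0 from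
        Finset.sum_congr rfl (fun b _ => by by_cases hb : b = z <;> simp [hb])]
      rw [Finset.sum_ite_eq' Finset.univ z (fun b => if G.Adj a b then m else 0)]
      simp [G.adj_comm]
    rw [Finset.sum_congr rfl (fun a _ => inner a)]
    rw [sum_ite_m G δ hreg m z]
  rw [e1, e2]; ring

open Classical in
lemma T_diff [Fintype V] [DecidableEq V] (G : SimpleGraph V) (C : V → Option τ)
    (u w : V) (t : τ) (hu : C u = some t) (hw : C w = none)
    (hz : ∀ x, C x = none ↔ x = w) :
    (∑ p : V × V, if G.Adj p.1 p.2 ∧ ((move C u w) p.1).isSome ∧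
        move C u w p.1 = move C u w p.2 then (1:ℚ) else 0)
    - (∑ p : V × V, if G.Adj p.1 p.2 ∧ (C p.1).isSome ∧ C p.1 = C p.2 then (1:ℚ) else 0)
    = 2 * (((sameNbrs G (move C u w) w t).card : ℚ) - ((sameNbrs G C u t).card : ℚ)) := by
  have huw : u ≠ w := by intro hh; rw [hh, hw] at hu; simp at hu
  set σ := Equiv.swap u w with hσdef
  have hσu : σ u = w := Equiv.swap_apply_left u w
  have hσw : σ w = u := Equiv.swap_apply_right u w
  have hσ : ∀ x, x ≠ u → x ≠ w → σ x = x := fun x h1 h2 =>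
    Equiv.swap_apply_of_ne_of_ne h1 h2
  have hCC' : ∀ x, move C u w x = C (σ x) := by
    intro x
    by_cases h1 : x = w
    · subst h1; simp [move, hσw]
    · by_cases h2 : x = u
      · subst h2; simp [move, hσu, hw, huw]
      · simp [move, h1, h2, hσ x h2 h1]
  have hT' : (∑ p : V × V, if G.Adj p.1 p.2 ∧ ((move C u w) p.1).isSome ∧
        move C u w p.1 = move C u w p.2 then (1:ℚ) else 0)
      = ∑ p : V × V, (if G.Adj (σ p.1) (σ p.2) ∧ (C p.1).isSome ∧ C p.1 = C p.2
          then (1:ℚ) else 0) := by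
    rw [← Equiv.sum_comp (σ.prodCongr σ)
      (fun p : V × V => if G.Adj (σ p.1) (σ p.2) ∧ (C p.1).isSome ∧ C p.1 = C p.2
        then (1:ℚ) else 0)]
    apply Finset.sum_congr rfl
    intro p _
    have hσσ : ∀ x, σ (σ x) = x := fun x => Equiv.swap_apply_self u w x
    simp only [Equiv.prodCongr_apply, Prod.map_fst, Prod.map_snd, hCC', hσσ]
  rw [hT', ← Finset.sum_sub_distrib, Fintype.sum_prod_type]
  set g : V → V → ℚ := fun a b =>
    (if G.Adj (σ a) (σ b) ∧ (C a).isSome ∧ C a = C b then (1:ℚ) else 0) -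
    (if G.Adj a b ∧ (C a).isSome ∧ C a = C b then (1:ℚ) else 0) with hgdef
  have gzero : ∀ a b, a ≠ u → b ≠ u → g a b = 0 := by
    intro a b ha hb
    by_cases haw : a = w
    · subst haw; simp [hgdef, hw]
    · have hσa : σ a = a := hσ a ha haw
      by_cases hbw : b = w
      · subst hbw
        have h1 : C a ≠ none := fun hh => haw ((hz a).mp hh)
        have h3 : C a ≠ C b := by rw [hw]; exact h1
        simp [hgdef, hσa, h3]
      · have hσb : σ b = b := hσ b hb hbw
        simp [hgdef, hσa, hσb]
  have hrow : ∀ a, a ≠ u → (∑ b, g a b) = g a u := fun a ha =>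
    Finset.sum_eq_single_of_mem u (Finset.mem_univ u) (fun b _ hb => gzero a b ha hb)
  have guu : g u u = 0 := by
    simp [hgdef, hσu, G.irrefl]
  have key1 : (∑ b, g u b) = ((sameNbrs G (move C u w) w t).card : ℚ)
      - ((sameNbrs G C u t).card : ℚ) := by
    rw [show (∑ b, g u b) = (∑ b, if G.Adj (σ u) (σ b) ∧ (C u).isSome ∧ C u = C b
        then (1:ℚ) else 0) - (∑ b, if G.Adj u b ∧ (C u).isSome ∧ C u = C b
        then (1:ℚ) else 0) from Finset.sum_sub_distrib _ _]
    rw [Finset.sum_boole, Finset.sum_boole]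
    congr 3
    · ext b
      simp only [Finset.mem_filter, Finset.mem_univ, true_and, sameNbrs, hσu]
      constructor
      · rintro ⟨hadj, -, heq⟩
        by_cases hb1 : b = u
        · subst hb1; rw [hσu] at hadj; exact absurd hadj (G.irrefl)
        · by_cases hb2 : b = w
          · subst hb2; rw [hw] at heq; rw [heq] at hu; simp at hu
          · rw [hσ b hb1 hb2] at hadj
            exact ⟨hadj, by rw [hCC' b, hσ b hb1 hb2, ← heq, hu]⟩
      · rintro ⟨hadj, hsome⟩
        by_cases hb1 : b = u
        · subst hb1
          rw [hCC' b, hσu, hw] at hsome; simp at hsome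
        · by_cases hb2 : b = w
          · subst hb2; exact absurd hadj (G.irrefl)
          · rw [hCC' b, hσ b hb1 hb2] at hsome
            refine ⟨by rw [hσ b hb1 hb2]; exact hadj, by rw [hu]; exact rfl, ?_⟩
            rw [hu, hsome]
    · ext b
      simp only [Finset.mem_filter, Finset.mem_univ, true_and, sameNbrs]
      constructor
      · rintro ⟨hadj, -, heq⟩
        exact ⟨hadj, by rw [← heq, hu]⟩
      · rintro ⟨hadj, hsome⟩
        exact ⟨hadj, by rw [hu]; exact rfl, by rw [hu, hsome]⟩
  have key2 : (∑ a ∈ Finset.univ.erase u, g a u)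
      = ((sameNbrs G (move C u w) w t).card : ℚ) - ((sameNbrs G C u t).card : ℚ) := by
    rw [Finset.sum_erase Finset.univ (f := fun a => g a u) guu]
    rw [show (∑ a, g a u) = (∑ a, if G.Adj (σ a) (σ u) ∧ (C a).isSome ∧ C a = C u
        then (1:ℚ) else 0) - (∑ a, if G.Adj a u ∧ (C a).isSome ∧ C a = C u
        then (1:ℚ) else 0) from Finset.sum_sub_distrib _ _]
    rw [Finset.sum_boole, Finset.sum_boole]
    congr 3
    · ext a
      simp only [Finset.mem_filter, Finset.mem_univ, true_and, sameNbrs, hσu]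
      constructor
      · rintro ⟨hadj, -, heq⟩
        by_cases ha1 : a = u
        · subst ha1; rw [hσu] at hadj; exact absurd hadj (G.irrefl)
        · by_cases ha2 : a = w
          · subst ha2; rw [hw, hu] at heq; simp at heq
          · rw [hσ a ha1 ha2] at hadj
            refine ⟨G.adj_comm a w |>.mp hadj, ?_⟩
            rw [hCC' a, hσ a ha1 ha2, heq, hu]
      · rintro ⟨hadj, hsome⟩
        by_cases ha1 : a = u
        · subst ha1
          rw [hCC' a, hσu, hw] at hsome; simp at hsome
        · by_cases ha2 : a = w
          · subst ha2; exact absurd hadj (G.irrefl)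
          · rw [hCC' a, hσ a ha1 ha2] at hsome
            refine ⟨by rw [hσ a ha1 ha2]; exact (G.adj_comm w a).mp hadj,
              by rw [hsome]; exact rfl, by rw [hsome, hu]⟩
    · ext a
      simp only [Finset.mem_filter, Finset.mem_univ, true_and, sameNbrs]
      constructor
      · rintro ⟨hadj, -, heq⟩
        exact ⟨(G.adj_comm a u).mp hadj, by rw [heq, hu]⟩
      · rintro ⟨hadj, hsome⟩
        exact ⟨(G.adj_comm u a).mp hadj, by rw [hsome]; exact rfl, by rw [hsome, hu]⟩
  calc (∑ a, ∑ b, g a b)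
      = (∑ a ∈ Finset.univ.erase u, ∑ b, g a b) + (∑ b, g u b) :=
        (Finset.sum_erase_add Finset.univ _ (Finset.mem_univ u)).symm
    _ = (∑ a ∈ Finset.univ.erase u, g a u) + (∑ b, g u b) := by
        refine congrArg (· + _) (Finset.sum_congr rfl fun a ha => ?_)
        exact hrow a (Finset.ne_of_mem_erase ha)
    _ = 2 * (((sameNbrs G (move C u w) w t).card : ℚ)
          - ((sameNbrs G C u t).card : ℚ)) := by
        rw [key1, key2]; ring

open Classical in
lemma occ_split [Fintype V] (G : SimpleGraph V) (CC : V → Option τ) (v : V) (tt : τ) :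
    (occNbrs G CC v).card = (diffNbrs G CC v tt).card + (sameNbrs G CC v tt).card := by
  have hd : Disjoint (diffNbrs G CC v tt) (sameNbrs G CC v tt) := by
    rw [Finset.disjoint_left]
    rintro b hb1 hb2
    simp only [diffNbrs, sameNbrs, Finset.mem_filter] at hb1 hb2
    obtain ⟨-, -, s, hs, hst⟩ := hb1
    obtain ⟨-, -, hbt⟩ := hb2
    rw [hbt] at hs
    exact hst (Option.some.inj hs.symm)
  rw [← Finset.card_union_of_disjoint hd]
  congr 1
  ext b
  simp only [occNbrs, diffNbrs, sameNbrs, Finset.mem_union, Finset.mem_filter,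
    Finset.mem_univ, true_and]
  constructor
  · rintro ⟨hadj, hsome⟩
    obtain ⟨s, hs⟩ := Option.isSome_iff_exists.mp hsome
    by_cases hst : s = tt
    · exact Or.inr ⟨hadj, by rw [hs, hst]⟩
    · exact Or.inl ⟨hadj, s, hs, hst⟩
  · rintro (⟨hadj, s, hs, -⟩ | ⟨hadj, hs⟩)
    · exact ⟨hadj, by rw [hs]; rfl⟩
    · exact ⟨hadj, by rw [hs]; rfl⟩

end AuxLemmas

open Classical in
/-- On a δ-regular graph (δ ≥ 2) with exactly one empty node, any improving
move changes the potential by (same-type neighbors at the new node) minus (same-type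
neighbors at the old node), which is negative. -/
theorem stmt1 {V τ : Type} [Fintype V] [DecidableEq V]
    (G : SimpleGraph V) (δ : ℕ) (hδ : 2 ≤ δ) (hreg : G.IsRegularOfDegree δ)
    (m : ℚ) (hm0 : 0 < m) (hm1 : m < 1)
    (C : V → Option τ) (hone : emptyCount C = 1)
    (u w : V) (t : τ) (hu : C u = some t) (h : Improves G C u w) :
    potential G (move C u w) m - potential G C m =
      ((sameNbrs G (move C u w) w t).card : ℚ) - ((sameNbrs G C u t).card : ℚ) ∧
    potential G (move C u w) m - potential G C m < 0 := by
  have hw : C w = none := h.2.1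
  have huw : u ≠ w := by intro hh; rw [hh, hw] at hu; simp at hu
  -- w is the unique empty node
  have hz : ∀ x, C x = none ↔ x = w := by
    intro x
    constructor
    · intro hx
      by_contra hxw
      have hsub : ({x, w} : Finset V) ⊆ Finset.univ.filter (fun v => C v = none) := by
        intro y hy
        rcases Finset.mem_insert.mp hy with rfl | hy
        · exact Finset.mem_filter.mpr ⟨Finset.mem_univ _, hx⟩
        · rw [Finset.mem_singleton] at hy
          subst hy
          exact Finset.mem_filter.mpr ⟨Finset.mem_univ _, hw⟩
      have h2 : 2 ≤ emptyCount C := by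
        rw [← Finset.card_pair hxw]
        exact Finset.card_le_card hsub
      omega
    · rintro rfl; exact hw
  have hC'w : move C u w w = some t := by simp [move, hu]
  have hC'u : move C u w u = none := by simp [move, huw]
  have hz' : ∀ x, move C u w x = none ↔ x = u := by
    intro x
    by_cases h1 : x = w
    · subst h1
      rw [hC'w]
      simp [Ne.symm huw]
    · by_cases h2 : x = u
      · subst h2; simp [hC'u]
      · rw [show move C u w x = C x from by simp [move, h1, h2]]
        rw [hz x]
        constructor
        · intro hh; exact absurd hh h1
        · intro hh; exact absurd hh h2
  -- occupied-neighbor sets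
  have hsomeC : ∀ b, (C b).isSome ↔ b ≠ w := by
    intro b
    rw [Option.isSome_iff_ne_none]
    exact not_congr (hz b)
  have hsomeC' : ∀ b, ((move C u w) b).isSome ↔ b ≠ u := by
    intro b
    rw [Option.isSome_iff_ne_none]
    exact not_congr (hz' b)
  have hoccu : occNbrs G C u = (G.neighborFinset u).erase w := by
    ext b
    simp only [occNbrs, Finset.mem_filter, Finset.mem_univ, true_and, Finset.mem_erase,
      SimpleGraph.mem_neighborFinset, hsomeC b]
    exact and_comm
  have hoccw : occNbrs G (move C u w) w = (G.neighborFinset w).erase u := by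
    ext b
    simp only [occNbrs, Finset.mem_filter, Finset.mem_univ, true_and, Finset.mem_erase,
      SimpleGraph.mem_neighborFinset, hsomeC' b]
    exact and_comm
  have d1 : (G.neighborFinset u).card = δ := hreg u
  have d2 : (G.neighborFinset w).card = δ := hreg w
  have hocc_card : (occNbrs G C u).card = (occNbrs G (move C u w) w).card
      ∧ (occNbrs G C u).card ≠ 0 := by
    rw [hoccu, hoccw]
    by_cases hadj : G.Adj u w
    · rw [Finset.card_erase_of_mem (by simpa using hadj),
        Finset.card_erase_of_mem (by simpa using hadj.symm), d1, d2]
      exact ⟨rfl, by omega⟩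
    · rw [Finset.erase_eq_of_notMem (by simpa using hadj),
        Finset.erase_eq_of_notMem (by simpa using fun hh => hadj hh.symm), d1, d2]
      exact ⟨rfl, by omega⟩
  -- utilities
  have hne0 : (occNbrs G C u).card ≠ 0 := hocc_card.2
  have hne1 : (occNbrs G (move C u w) w).card ≠ 0 := by
    rw [← hocc_card.1]; exact hne0
  have hutilu : util G C u
      = ((diffNbrs G C u t).card : ℚ) / ((occNbrs G C u).card : ℚ) := by
    unfold util
    rw [hu]
    exact if_neg hne0
  have hutilw : util G (move C u w) w
      = ((diffNbrs G (move C u w) w t).card : ℚ) / ((occNbrs G (move C u w) w).card : ℚ) := by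
    unfold util
    rw [hC'w]
    exact if_neg hne1
  have himp := h.2.2
  rw [hutilu, hutilw, ← hocc_card.1] at himp
  have hKpos : (0:ℚ) < ((occNbrs G C u).card : ℚ) := by
    exact_mod_cast Nat.pos_of_ne_zero hne0
  have hdlt : (diffNbrs G C u t).card < (diffNbrs G (move C u w) w t).card := by
    have := (div_lt_div_iff_of_pos_right hKpos).mp himp
    exact_mod_cast this
  have s0 := occ_split G C u t
  have s1 := occ_split G (move C u w) w t
  have hsame : (sameNbrs G (move C u w) w t).card < (sameNbrs G C u t).card := by
    omega
  -- potential difference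
  have e1 := pot_eq G δ hreg m (move C u w) u hz'
  have e2 := pot_eq G δ hreg m C w hz
  have e3 := T_diff G C u w t hu hw hz
  have hΔ : potential G (move C u w) m - potential G C m
      = ((sameNbrs G (move C u w) w t).card : ℚ) - ((sameNbrs G C u t).card : ℚ) := by
    rw [e1, e2]
    linarith [e3]
  refine ⟨hΔ, ?_⟩
  rw [hΔ]
  have : ((sameNbrs G (move C u w) w t).card : ℚ) < ((sameNbrs G C u t).card : ℚ) := by
    exact_mod_cast hsame
  linarith
end

section
/- Every diversity-seeking jump game on a tree topology with exactly one empty node and no stubborn agents admits a pure Nash equilibrium assignment. -/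
open Finset

variable {V τ : Type}

/-! Make a leaf `w` of the tree the empty node and let `x` be its neighbour. Give `x` a type `t`
of maximal multiplicity and spread the agents over the two colour classes of the tree minus `w`
so that every type other than `t` lies inside a single class; a greedy subset sum makes this
possible because no type outnumbers `t`. Then an agent of type `t` gains nothing by jumping next
to `x`, while every other agent already has utility 1: all its neighbours are occupied and lie in
the other colour class. -/

section Utility

variable [Fintype V] (G : SimpleGraph V) (C : V → Option τ)

theorem diffNbrs_subset_occNbrs (v : V) (t : τ) : diffNbrs G C v t ⊆ occNbrs G C v := by
  intro y hy
  simp only [diffNbrs, occNbrs, mem_filter] at hy ⊢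
  obtain ⟨hy, hadj, s, hs, -⟩ := hy
  exact ⟨hy, hadj, by simp [hs]⟩

theorem util_nonneg (v : V) : 0 ≤ util G C v := by
  unfold util
  split
  · exact le_rfl
  · split_ifs <;> positivity

theorem util_le_one (v : V) : util G C v ≤ 1 := by
  unfold util
  split
  · exact zero_le_one
  · rename_i t _
    split_ifs with h
    · exact zero_le_one
    · rw [div_le_one (by positivity)]
      exact_mod_cast card_le_card (diffNbrs_subset_occNbrs G C v t)

variable {G C}

theorem util_eq_zero_of_forall_adj {v : V} {s : τ} (hv : C v = some s)
    (h : ∀ y, G.Adj v y → C y = none ∨ C y = some s) : util G C v = 0 := by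
  have hdiff : diffNbrs G C v s = ∅ := by
    refine eq_empty_of_forall_notMem fun y hy => ?_
    simp only [diffNbrs, mem_filter] at hy
    obtain ⟨-, hadj, s', hs', hne⟩ := hy
    rcases h y hadj with hy | hy <;> simp_all
  simp [util, hv, hdiff]

theorem util_eq_one_of_forall_adj {v : V} {s : τ} (hv : C v = some s) (hnbr : ∃ y, G.Adj v y)
    (h : ∀ y, G.Adj v y → ∃ s', C y = some s' ∧ s' ≠ s) : util G C v = 1 := by
  have hdiff : diffNbrs G C v s = occNbrs G C v := by
    refine (diffNbrs_subset_occNbrs G C v s).antisymm fun y hy => ?_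
    simp only [diffNbrs, occNbrs, mem_filter] at hy ⊢
    exact ⟨hy.1, hy.2.1, h y hy.2.1⟩
  have hocc : (occNbrs G C v).card ≠ 0 := by
    obtain ⟨y, hy⟩ := hnbr
    obtain ⟨s', hs', -⟩ := h y hy
    exact card_ne_zero_of_mem (a := y) (by simp [occNbrs, hy, hs'])
  simp only [util, hv, hdiff, if_neg hocc]
  exact div_self (by exact_mod_cast hocc)

end Utility

theorem isEquil_of_empty_leaf [Fintype V] [DecidableEq V] {G : SimpleGraph V}
    {C : V → Option τ} {w x : V} {t : τ} (hleaf : ∀ y, G.Adj w y ↔ y = x) (hw : C w = none)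
    (hx : C x = some t) (hocc : ∀ v ≠ w, (C v).isSome) (hnbr : ∀ v, ∃ y, G.Adj v y)
    (hsame : ∀ u v s, G.Adj u v → C u = some s → C v = some s → s = t) : IsEquil G C := by
  intro u w' hu hw'
  obtain rfl : w' = w := by
    by_contra h
    simpa [hw'] using hocc w' h
  obtain ⟨s, hs⟩ := Option.isSome_iff_exists.1 hu
  have hmoved : move C u w' w' = some s := by simp [move, hs]
  by_cases hstay : u ≠ x ∧ s ≠ t
  · rw [util_eq_one_of_forall_adj hs (hnbr u) fun y hy => ?_]
    · exact util_le_one G _ w'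
    have hyw : y ≠ w' := by
      rintro rfl
      exact hstay.1 ((hleaf u).1 hy.symm)
    obtain ⟨s', hs'⟩ := Option.isSome_iff_exists.1 (hocc y hyw)
    exact ⟨s', hs', fun h => hstay.2 (hsame u y s hy hs (h ▸ hs'))⟩
  · rw [util_eq_zero_of_forall_adj hmoved fun y hy => ?_]
    · exact util_nonneg G C u
    obtain rfl := (hleaf y).1 hy
    by_cases hyu : y = u
    · subst hyu
      simp [move, hy.ne']
    · obtain rfl : s = t := by_contra fun hst => hstay ⟨Ne.symm hyu, hst⟩
      simp [move, hy.ne', hyu, hx]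

theorem Finset.exists_subset_sum_lt_le {ι : Type*} (F : Finset ι) (f : ι → ℕ) {m a : ℕ}
    (hf : ∀ i ∈ F, f i ≤ m) (ha₀ : 0 < a) (ha : a ≤ ∑ i ∈ F, f i + m) :
    ∃ S ⊆ F, ∑ i ∈ S, f i < a ∧ a ≤ ∑ i ∈ S, f i + m := by
  classical
  induction F using Finset.induction_on with
  | empty => exact ⟨∅, subset_rfl, by simpa using ha₀, by simpa using ha⟩
  | insert b F hb ih =>
    by_cases hF : a ≤ ∑ i ∈ F, f i + m
    · obtain ⟨S, hSF, hS⟩ := ih (fun i hi => hf i (mem_insert_of_mem hi)) hF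
      exact ⟨S, hSF.trans (subset_insert b F), hS⟩
    · refine ⟨insert b F, subset_rfl, ?_, ha⟩
      rw [sum_insert hb]
      have := hf b (mem_insert_self b F)
      omega

theorem exists_le_sum_eq_of_le_max [Fintype τ] [DecidableEq τ] (f : τ → ℕ) {t : τ}
    (ht : ∀ s, f s ≤ f t) {a : ℕ} (ha₀ : 0 < a) (ha : a ≤ ∑ s, f s) :
    ∃ g : τ → ℕ, g ≤ f ∧ ∑ s, g s = a ∧ 0 < g t ∧ ∀ s ≠ t, g s = 0 ∨ g s = f s := by
  have hsplit : ∑ s, f s = ∑ s ∈ univ.erase t, f s + f t :=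
    (sum_erase_add _ _ (mem_univ t)).symm
  obtain ⟨S, hS, hSa, haS⟩ := exists_subset_sum_lt_le (univ.erase t) f
    (fun s _ => ht s) ha₀ (hsplit ▸ ha)
  have htS : t ∉ S := fun h => (mem_erase.1 (hS h)).1 rfl
  refine ⟨fun s => if s = t then a - ∑ i ∈ S, f i else if s ∈ S then f s else 0,
    fun s => ?_, ?_, by simpa using hSa, fun s hs => by by_cases s ∈ S <;> simp [*]⟩
  · dsimp only
    split_ifs with h
    · subst h
      omega
    · exact le_rfl
    · exact Nat.zero_le _
  · rw [← sum_erase_add _ _ (mem_univ t), if_pos rfl]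
    rw [sum_congr rfl fun s hs => if_neg (ne_of_mem_erase hs), sum_ite_mem,
      inter_eq_right.2 hS]
    omega

theorem Finset.exists_card_filter_eq [Fintype τ] [DecidableEq τ] [Nonempty τ] (Y : Finset V)
    (g : τ → ℕ) (hY : ∑ s, g s = #Y) : ∃ c : V → τ, ∀ s, #{y ∈ Y | c y = s} = g s := by
  classical
  let e : Y ≃ Σ s, Fin (g s) := Fintype.equivOfCardEq (by simp [hY])
  refine ⟨fun v => if h : v ∈ Y then (e ⟨v, h⟩).1 else Classical.arbitrary τ, fun s => ?_⟩
  calc #{y ∈ Y | (if h : y ∈ Y then (e ⟨y, h⟩).1 else Classical.arbitrary τ) = s}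
      = Fintype.card {y : Y // (e y).1 = s} := by
        rw [Fintype.card_subtype, ← card_map (Function.Embedding.subtype _)]
        congr 1
        ext v
        by_cases hv : v ∈ Y <;> simp [hv]
    _ = Fintype.card {p : Σ s, Fin (g s) // p.1 = s} :=
        Fintype.card_congr (e.subtypeEquiv fun _ => Iff.rfl)
    _ = g s := by rw [Fintype.card_congr (Equiv.sigmaSubtype s), Fintype.card_fin]

theorem Finset.exists_card_filter_eq_of_mem [Fintype τ] [DecidableEq τ] {Y : Finset V}
    {g : τ → ℕ} (hY : ∑ s, g s = #Y) {y₀ : V} (hy₀ : y₀ ∈ Y) {s₀ : τ} (hs₀ : 0 < g s₀) :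
    ∃ c : V → τ, c y₀ = s₀ ∧ ∀ s, #{y ∈ Y | c y = s} = g s := by
  classical
  have : Nonempty τ := ⟨s₀⟩
  obtain ⟨c, hc⟩ := Y.exists_card_filter_eq g hY
  obtain ⟨y₁, hy₁⟩ : ({y ∈ Y | c y = s₀} : Finset V).Nonempty := card_pos.1 (hc s₀ ▸ hs₀)
  rw [mem_filter] at hy₁
  refine ⟨c ∘ Equiv.swap y₀ y₁, by simp [hy₁.2], fun s => hc s ▸ ?_⟩
  refine card_equiv (Equiv.swap y₀ y₁) fun v => ?_
  have hswap : Equiv.swap y₀ y₁ v ∈ Y ↔ v ∈ Y := by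
    rcases eq_or_ne v y₀ with rfl | h₀
    · simp [hy₀, hy₁.1]
    rcases eq_or_ne v y₁ with rfl | h₁
    · simp [hy₀, hy₁.1]
    · rw [Equiv.swap_apply_of_ne_of_ne h₀ h₁]
  simp [hswap]

section Assignment

variable [DecidableEq V]

def assignOnSides (w : V) (A : Finset V) (cA cB : V → τ) : V → Option τ :=
  fun v => if v = w then none else some (if v ∈ A then cA v else cB v)

theorem assignOnSides_eq_some {w v : V} {A : Finset V} {cA cB : V → τ} {s : τ} :
    assignOnSides w A cA cB v = some s ↔ v ≠ w ∧ (v ∈ A ∧ cA v = s ∨ v ∉ A ∧ cB v = s) := by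
  unfold assignOnSides
  by_cases hvA : v ∈ A <;> split_ifs <;> simp_all

theorem countType_assignOnSides [Fintype V] [DecidableEq τ] {w : V} {A : Finset V} (hwA : w ∉ A)
    (cA cB : V → τ) (s : τ) :
    countType (assignOnSides w A cA cB) s =
      #{y ∈ A | cA y = s} + #{y ∈ univ.erase w \ A | cB y = s} := by
  rw [countType, ← card_union_of_disjoint (disjoint_filter_filter disjoint_sdiff)]
  congr 1
  ext v
  have hvw : v ∈ A → v ≠ w := fun hvA => ne_of_mem_of_not_mem hvA hwA
  simp only [mem_filter, mem_univ, true_and, assignOnSides_eq_some, mem_union, mem_sdiff,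
    mem_erase, and_true]
  tauto

end Assignment

theorem exists_assignment_types_within_side [Fintype V] [Fintype τ] (cnt : τ → ℕ)
    (hcard : ∑ s, cnt s + 1 = Fintype.card V) {w x : V} {A : Finset V} (hxA : x ∈ A)
    (hwA : w ∉ A) {t : τ} (ht : ∀ s, cnt s ≤ cnt t) :
    ∃ C : V → Option τ, (∀ s, countType C s = cnt s) ∧ C w = none ∧ C x = some t ∧
      (∀ v ≠ w, (C v).isSome) ∧
      ∀ u v s, C u = some s → C v = some s → s ≠ t → (u ∈ A ↔ v ∈ A) := by
  classical
  set B := univ.erase w \ A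
  have hAw : A ⊆ univ.erase w := fun v hv => mem_erase.2 ⟨ne_of_mem_of_not_mem hv hwA, mem_univ v⟩
  have hAB : #A + #B = ∑ s, cnt s := by
    have := card_le_card hAw
    rw [card_sdiff_of_subset hAw, card_erase_of_mem (mem_univ w), card_univ]
    rw [card_erase_of_mem (mem_univ w), card_univ] at this
    omega
  obtain ⟨gA, hle, hsum, ht0, hsplit⟩ :=
    exists_le_sum_eq_of_le_max cnt ht (card_pos.2 ⟨x, hxA⟩) (by omega)
  obtain ⟨cA, hcAx, hcA⟩ := exists_card_filter_eq_of_mem hsum hxA ht0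
  have : Nonempty τ := ⟨t⟩
  obtain ⟨cB, hcB⟩ := B.exists_card_filter_eq (cnt - gA) (by
    rw [Fintype.sum_congr _ _ fun s => Pi.sub_apply cnt gA s,
      sum_tsub_distrib _ fun s _ => hle s, hsum]
    omega)
  have hmixed : ∀ u v s, s ≠ t → u ∈ A → v ≠ w → v ∉ A → cA u = s → cB v = s → False := by
    intro u v s hst hu hvw hvA hus hvs
    have hA : 0 < gA s := hcA s ▸ card_pos.2 ⟨u, mem_filter.2 ⟨hu, hus⟩⟩
    have hB : 0 < (cnt - gA) s := hcB s ▸ card_pos.2 ⟨v, by simp [B, hvw, hvA, hvs]⟩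
    rw [Pi.sub_apply] at hB
    rcases hsplit s hst with h | h <;> omega
  refine ⟨assignOnSides w A cA cB, fun s => ?_, by simp [assignOnSides],
    assignOnSides_eq_some.2 ⟨ne_of_mem_of_not_mem hxA hwA, Or.inl ⟨hxA, hcAx⟩⟩,
    fun v hv => by simp [assignOnSides, hv], fun u v s hu hv hst => ?_⟩
  · have : gA s ≤ cnt s := hle s
    rw [countType_assignOnSides hwA, hcA, hcB, Pi.sub_apply]
    omega
  · obtain ⟨huw, ⟨huA, hus⟩ | ⟨huA, hus⟩⟩ := assignOnSides_eq_some.1 hu <;>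
      obtain ⟨hvw, ⟨hvA, hvs⟩ | ⟨hvA, hvs⟩⟩ := assignOnSides_eq_some.1 hv
    · exact iff_of_true huA hvA
    · exact (hmixed u v s hst huA hvw hvA hus hvs).elim
    · exact (hmixed v u s hst hvA huw huA hvs hus).elim
    · exact iff_of_false huA hvA

theorem stmt3_general {V τ : Type} [Fintype V] [DecidableEq V] [Fintype τ]
    (G : SimpleGraph V) (hconn : G.Connected) (hac : G.IsAcyclic)
    (cnt : τ → ℕ) (hcard : (∑ t, cnt t) + 1 = Fintype.card V) :
    ∃ C : V → Option τ, (∀ t, countType C t = cnt t) ∧ IsEquil G C := by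
  classical
  rcases subsingleton_or_nontrivial V with hV | hV
  · have hzero : ∑ t, cnt t = 0 := by
      have := Fintype.card_le_one_iff_subsingleton.2 hV
      omega
    refine ⟨fun _ => none, fun t => ?_, fun u _ hu => by simp at hu⟩
    simp [countType, sum_eq_zero_iff.1 hzero t (mem_univ t)]
  have : Nonempty τ := by
    by_contra h
    have := Fintype.one_lt_card (α := V)
    simp_all
  obtain ⟨t, ht⟩ := Finite.exists_max cnt
  obtain ⟨w, hw⟩ := SimpleGraph.IsTree.exists_vert_degree_one_of_nontrivial ⟨hconn, hac⟩
  obtain ⟨x, hwx, hx⟩ := SimpleGraph.degree_eq_one_iff_existsUnique_adj.1 hw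
  let col := hac.coloringTwo
  obtain ⟨C, hcount, hCw, hCx, hocc, hside⟩ := exists_assignment_types_within_side cnt hcard
    (w := w) (x := x) (A := {v | v ≠ w ∧ col v = col x}) (by simp [hwx.ne']) (by simp) ht
  refine ⟨C, hcount, isEquil_of_empty_leaf (fun y => ⟨hx y, fun h => h ▸ hwx⟩) hCw hCx hocc
    hconn.preconnected.exists_adj_of_nontrivial fun u v s huv hu hv => by_contra fun hst => ?_⟩
  have huw : u ≠ w := by rintro rfl; simp_all
  have hvw : v ≠ w := by rintro rfl; simp_all
  have hsides := hside u v s hu hv hst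
  have hcol := col.valid huv
  simp only [mem_filter, mem_univ, true_and, ne_eq, huw, hvw, not_false_eq_true] at hsides
  grind

/-- Every diversity-seeking jump game on a tree with exactly one empty node
and no stubborn agents admits a pure Nash equilibrium. -/
theorem stmt3 {V τ : Type} [Fintype V] [DecidableEq V] [Fintype τ]
    (G : SimpleGraph V) (hconn : G.Connected) (hac : G.IsAcyclic)
    (hk : 2 ≤ Fintype.card τ)
    (cnt : τ → ℕ) (hcard : (∑ t, cnt t) + 1 = Fintype.card V) :
    ∃ C : V → Option τ, (∀ t, countType C t = cnt t) ∧ IsEquil G C :=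
  stmt3_general G hconn hac cnt hcard
end

section
/- For every k ≥ 2, the price of anarchy of any diversity-seeking jump game with n strategic agents of k symmetric types (each of size n/k) and no stubborn agents is at most k/(k−1): every pure Nash equilibrium has social welfare at least n(k−1)/k. -/
/-!
Connectivity gives an empty node `w` with at least one occupied neighbour. An agent of type `t`
may jump to `w`; there it keeps all of `w`'s neighbours of types other than `t` and loses at most
itself from the occupied ones, so in equilibrium its utility is at least the fraction of `w`'s
occupied neighbours not of type `t`. Each occupied neighbour of `w` counts for exactly `k - 1`
of the `k` types, so summing over the `q` agents of every type gives welfare at least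
`q (k - 1) = n (k - 1) / k`.
-/

open Finset

variable {V τ : Type}

lemma Finset.card_div_card_le_card_div_card {α K : Type*} [Semifield K] [LinearOrder K]
    [IsStrictOrderedRing K] {s t u : Finset α} (hst : s ⊆ t) (htu : t ⊆ u) :
    (#s : K) / #u ≤ #s / #t := by
  rcases (#t).eq_zero_or_pos with ht | ht
  · have hs : s = ∅ := subset_empty.mp (card_eq_zero.mp ht ▸ hst)
    simp [hs]
  · exact div_le_div_of_nonneg_left (by positivity) (by exact_mod_cast ht)
      (by exact_mod_cast card_le_card htu)

lemma SimpleGraph.Connected.exists_adj_of_exists_not {V : Type*} {G : SimpleGraph V}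
    (hG : G.Connected) {P : V → Prop} {a b : V} (ha : P a) (hb : ¬ P b) :
    ∃ u w, G.Adj u w ∧ P u ∧ ¬ P w := by
  obtain ⟨p⟩ := hG.preconnected a b
  obtain ⟨d, -, hu, hw⟩ := p.exists_boundary_dart {v | P v} ha hb
  exact ⟨d.fst, d.snd, d.adj, hu, hw⟩

section

open Classical

variable [Fintype V] {G : SimpleGraph V} {C : V → Option τ}

@[simp]
lemma mem_occNbrs {v x : V} : x ∈ occNbrs G C v ↔ G.Adj v x ∧ (C x).isSome := by
  simp [occNbrs]

@[simp]
lemma mem_diffNbrs {v x : V} {t : τ} :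
    x ∈ diffNbrs G C v t ↔ G.Adj v x ∧ ∃ s, C x = some s ∧ s ≠ t := by
  simp [diffNbrs]

lemma util_eq_div {v : V} {t : τ} (hv : C v = some t) :
    util G C v = (#(diffNbrs G C v t) : ℚ) / #(occNbrs G C v) := by
  rw [util, hv]
  split_ifs with h <;> simp [h]

lemma diffNbrs_eq_filter (v : V) (t : τ) :
    diffNbrs G C v t = {x ∈ occNbrs G C v | C x ≠ some t} := by
  ext x
  simp only [mem_diffNbrs, mem_filter, mem_occNbrs]
  cases C x <;> simp [eq_comm]

lemma sum_card_diffNbrs [Fintype τ] (v : V) :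
    ∑ t, (#(diffNbrs G C v t) : ℚ) = (Fintype.card τ - 1) * #(occNbrs G C v) := by
  have hsplit (t : τ) : (#(diffNbrs G C v t) : ℚ)
      = #(occNbrs G C v) - #{x ∈ occNbrs G C v | C x = some t} := by
    rw [diffNbrs_eq_filter, eq_sub_iff_add_eq, ← Nat.cast_add, add_comm,
      card_filter_add_card_filter_not]
  have hfibres : #(occNbrs G C v) = ∑ t, #{x ∈ occNbrs G C v | C x = some t} := by
    rw [card_eq_sum_card_fiberwise (f := C) (t := univ) (fun _ _ => mem_coe.mpr (mem_univ _)),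
      Fintype.sum_option, add_eq_right, card_eq_zero, filter_eq_empty_iff]
    intro x hx
    simpa [Option.isSome_iff_ne_none] using (mem_occNbrs.mp hx).2
  simp only [hsplit, sum_sub_distrib, sum_const, card_univ, nsmul_eq_mul]
  rw [hfibres]
  push_cast
  ring

lemma countType_pos_iff {t : τ} : 0 < countType C t ↔ ∃ v, C v = some t := by
  simp [countType, card_pos, Finset.Nonempty]

variable [DecidableEq V]

lemma occNbrs_move_self {u w : V} (huw : u ≠ w) :
    occNbrs G (move C u w) w = (occNbrs G C w).erase u := by
  ext x
  by_cases hxw : x = w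
  · simp [hxw]
  · by_cases hxu : x = u <;> simp [move, hxw, hxu, huw]

lemma diffNbrs_move_self {u w : V} {t : τ} (hu : C u = some t) :
    diffNbrs G (move C u w) w t = diffNbrs G C w t := by
  ext x
  by_cases hxw : x = w
  · simp [hxw]
  · by_cases hxu : x = u <;> simp [move, hxw, hxu, hu]

lemma diffNbrs_subset_erase {u w : V} {t : τ} (hu : C u = some t) :
    diffNbrs G C w t ⊆ (occNbrs G C w).erase u := by
  intro x hx
  obtain ⟨hadj, s, hs, hst⟩ := mem_diffNbrs.mp hx
  refine mem_erase.mpr ⟨?_, mem_occNbrs.mpr ⟨hadj, by simp [hs]⟩⟩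
  rintro rfl
  exact hst (Option.some_injective _ (hs.symm.trans hu))

lemma IsEquil.card_div_card_le_util (heq : IsEquil G C) {u w : V} {t : τ}
    (hu : C u = some t) (hw : C w = none) :
    (#(diffNbrs G C w t) : ℚ) / #(occNbrs G C w) ≤ util G C u := by
  have huw : u ≠ w := by rintro rfl; simp [hu] at hw
  have hmoved : move C u w w = some t := by simp [move, hu]
  calc (#(diffNbrs G C w t) : ℚ) / #(occNbrs G C w)
      ≤ #(diffNbrs G C w t) / #((occNbrs G C w).erase u) :=
        card_div_card_le_card_div_card (diffNbrs_subset_erase hu) (erase_subset _ _)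
    _ = util G (move C u w) w := by
        rw [util_eq_div hmoved, occNbrs_move_self huw, diffNbrs_move_self hu]
    _ ≤ util G C u := heq u w (by simp [hu]) hw

lemma IsEquil.sum_countType_mul_le_SW [Fintype τ] (heq : IsEquil G C) {w : V}
    (hw : C w = none) :
    ∑ t, (countType C t : ℚ) * (#(diffNbrs G C w t) / #(occNbrs G C w)) ≤ SW G C := by
  set g : τ → ℚ := fun t => #(diffNbrs G C w t) / #(occNbrs G C w)
  have hagent (v : V) : ∑ t, (if C v = some t then g t else 0) ≤ util G C v := by
    rcases hv : C v with _ | t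
    · simp [util, hv]
    · simpa using heq.card_div_card_le_util hv hw
  calc ∑ t, (countType C t : ℚ) * g t
      = ∑ t, ∑ v, (if C v = some t then g t else 0) := by
        simp [countType, ← sum_filter]
    _ = ∑ v, ∑ t, (if C v = some t then g t else 0) := sum_comm
    _ ≤ SW G C := sum_le_sum fun v _ => hagent v

end

/-- With k ≥ 2 symmetric types of size n/k each, every pure Nash equilibrium
has social welfare at least n(k−1)/k; hence the price of anarchy is at most k/(k−1). -/
theorem stmt6 {V τ : Type} [Fintype V] [DecidableEq V] [Fintype τ]
    (G : SimpleGraph V) (hconn : G.Connected)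
    (hk : 2 ≤ Fintype.card τ)
    (C : V → Option τ) (q : ℕ) (hq : 1 ≤ q)
    (hcnt : ∀ t : τ, countType C t = q)
    (hempty : ∃ v, C v = none)
    (heq : IsEquil G C) :
    ((Fintype.card τ * q : ℕ) : ℚ) * ((Fintype.card τ : ℚ) - 1) / (Fintype.card τ : ℚ)
      ≤ SW G C := by
  obtain ⟨t₀⟩ : Nonempty τ := Fintype.card_pos_iff.mp (by omega)
  obtain ⟨a, ha⟩ := countType_pos_iff.mp (hq.trans_eq (hcnt t₀).symm)
  obtain ⟨b, hb⟩ := hempty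
  obtain ⟨u, w, huw, hu, hw⟩ := hconn.exists_adj_of_exists_not (P := fun v => (C v).isSome)
    (a := a) (b := b) (by simp [ha]) (by simp [hb])
  have hd : (#(occNbrs G C w) : ℚ) ≠ 0 :=
    Nat.cast_ne_zero.mpr (card_ne_zero_of_mem (mem_occNbrs.mpr ⟨huw.symm, hu⟩))
  have hwelfare := heq.sum_countType_mul_le_SW (Option.not_isSome_iff_eq_none.mp hw)
  simp only [hcnt, ← mul_sum, ← sum_div, sum_card_diffNbrs] at hwelfare
  have hk₀ : (Fintype.card τ : ℚ) ≠ 0 := by positivity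
  calc ((Fintype.card τ * q : ℕ) : ℚ) * ((Fintype.card τ : ℚ) - 1) / (Fintype.card τ : ℚ)
      = q * ((Fintype.card τ - 1) * #(occNbrs G C w) / #(occNbrs G C w)) := by
        push_cast; field_simp
    _ ≤ SW G C := hwelfare
end

section
/- There is a diversity-seeking jump game with k = 2 types whose price of stability is at least 65/62: on a specific 7-node topology with 2 red and 4 blue agents, the optimal social welfare is 65/12 but it is not attained at any equilibrium, and the best equilibrium has social welfare 62/12. -/
open Finset

variable {V τ : Type}

/-! Every vertex of `posGraph` has degree at most 4, so all utilities are multiples of 1/12: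
twelve times the utility, and with it the welfare and the equilibrium condition, is a natural
number computable from the configuration. The bounds on the optimum and on equilibria are then
finite checks over the 3^7 assignments of types to the vertices. -/

section ScaledUtility

variable [Fintype V] (G : SimpleGraph V) [DecidableRel G.Adj]

def occCount (C : V → Option τ) (v : V) : ℕ :=
  #{u | G.Adj v u ∧ (C u).isSome}

def diffCount [DecidableEq τ] (C : V → Option τ) (v : V) (t : τ) : ℕ :=
  #{u | G.Adj v u ∧ (C u).isSome ∧ C u ≠ some t}

/-- `L` times `util`, exact whenever `L` is a multiple of the number of occupied neighbours;
`L / 0 = 0` matches the value of `util` at an isolated agent. -/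
def scaledUtil [DecidableEq τ] (L : ℕ) (C : V → Option τ) (v : V) : ℕ :=
  match C v with
  | none => 0
  | some t => diffCount G C v t * (L / occCount G C v)

lemma card_occNbrs (C : V → Option τ) (v : V) : #(occNbrs G C v) = occCount G C v := by
  simp only [occNbrs, occCount]
  congr

lemma card_diffNbrs [DecidableEq τ] (C : V → Option τ) (v : V) (t : τ) :
    #(diffNbrs G C v t) = diffCount G C v t := by
  simp only [diffNbrs, diffCount]
  congr
  ext u
  cases C u <;> simp

lemma occCount_le_degree (C : V → Option τ) (v : V) : occCount G C v ≤ G.degree v := by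
  rw [← G.card_neighborFinset_eq_degree]
  exact card_le_card fun u hu => by simp_all

variable [DecidableEq τ] {L : ℕ}

lemma util_eq_scaledUtil_div {v : V} (hL0 : L ≠ 0)
    (hL : ∀ k, 0 < k → k ≤ G.degree v → k ∣ L) (C : V → Option τ) :
    util G C v = scaledUtil G L C v / L := by
  unfold util scaledUtil
  rcases hCv : C v with _ | t
  · simp
  dsimp only
  rw [card_occNbrs, card_diffNbrs]
  rcases Nat.eq_zero_or_pos (occCount G C v) with h0 | hpos
  · simp [h0]
  obtain ⟨q, rfl⟩ := hL _ hpos (occCount_le_degree G C v)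
  rw [if_neg hpos.ne', Nat.mul_div_cancel_left q hpos]
  have hq : (q : ℚ) ≠ 0 := by exact_mod_cast right_ne_zero_of_mul hL0
  push_cast
  field_simp

def IsScaledEquil [DecidableEq V] (L : ℕ) (C : V → Option τ) : Prop :=
  ∀ u w, (C u).isSome → C w = none → scaledUtil G L (move C u w) w ≤ scaledUtil G L C u

instance [DecidableEq V] (L : ℕ) (C : V → Option τ) : Decidable (IsScaledEquil G L C) :=
  inferInstanceAs (Decidable (∀ _ _, _))

lemma SW_eq_sum_scaledUtil_div (hL0 : L ≠ 0)
    (hL : ∀ v, ∀ k, 0 < k → k ≤ G.degree v → k ∣ L) (C : V → Option τ) :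
    SW G C = (∑ v, scaledUtil G L C v : ℕ) / L := by
  rw [SW, Nat.cast_sum, sum_div]
  exact sum_congr rfl fun v _ => util_eq_scaledUtil_div G hL0 (hL v) C

lemma isEquil_iff_isScaledEquil [DecidableEq V] (hL0 : L ≠ 0)
    (hL : ∀ v, ∀ k, 0 < k → k ≤ G.degree v → k ∣ L) (C : V → Option τ) :
    IsEquil G C ↔ IsScaledEquil G L C := by
  have hutil (C : V → Option τ) (v : V) := util_eq_scaledUtil_div G hL0 (hL v) C
  simp only [IsEquil, IsScaledEquil, hutil,
    div_le_div_iff_of_pos_right (by positivity : (0 : ℚ) < L), Nat.cast_le]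

end ScaledUtility

lemma countType_eq_card [Fintype V] [DecidableEq τ] (C : V → Option τ) (t : τ) :
    countType C t = #{v | C v = some t} := by
  simp only [countType]
  congr

abbrev posGraph : SimpleGraph (Fin 7) :=
  SimpleGraph.fromEdgeSet {s(0, 1), s(0, 2), s(0, 5), s(0, 6), s(1, 2), s(1, 4), s(2, 3)}

lemma posGraph_degree_le (v : Fin 7) : posGraph.degree v ≤ 4 := by
  revert v; decide

lemma dvd_twelve_of_le_posGraph_degree (v : Fin 7) (k : ℕ) (hk : 0 < k)
    (hkv : k ≤ posGraph.degree v) : k ∣ 12 := by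
  have := hkv.trans (posGraph_degree_le v)
  interval_cases k <;> norm_num

lemma posGraph_welfare_le : ∀ C : Fin 7 → Option Bool, #{v | C v = some true} = 2 →
    #{v | C v = some false} = 4 → ∑ v, scaledUtil posGraph 12 C v ≤ 65 := by
  simp only [Fin.forall_fin_succ_pi, Fin.forall_fin_zero_pi]
  decide +kernel

lemma posGraph_equilibrium_welfare_le : ∀ C : Fin 7 → Option Bool,
    #{v | C v = some true} = 2 → #{v | C v = some false} = 4 → IsScaledEquil posGraph 12 C →
    ∑ v, scaledUtil posGraph 12 C v ≤ 62 := by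
  simp only [Fin.forall_fin_succ_pi, Fin.forall_fin_zero_pi]
  decide +kernel

def posOptimum : Fin 7 → Option Bool :=
  ![some true, some false, some true, some false, none, some false, some false]

def posBestEquilibrium : Fin 7 → Option Bool :=
  ![some true, some false, some false, some true, none, some false, some false]

lemma posOptimum_spec : #{v | posOptimum v = some true} = 2 ∧
    #{v | posOptimum v = some false} = 4 ∧ ∑ v, scaledUtil posGraph 12 posOptimum v = 65 := by
  decide +kernel

lemma posBestEquilibrium_spec : #{v | posBestEquilibrium v = some true} = 2 ∧
    #{v | posBestEquilibrium v = some false} = 4 ∧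
    IsScaledEquil posGraph 12 posBestEquilibrium ∧
    ∑ v, scaledUtil posGraph 12 posBestEquilibrium v = 62 := by
  decide +kernel

/-- There is a diversity-seeking jump game with two types (2 red = `true`,
4 blue = `false` agents) on a 7-node topology whose optimal social welfare is 65/12,
while the best equilibrium has social welfare 62/12; hence the price of stability is at
least 65/62. -/
theorem stmt12 :
    ∃ G : SimpleGraph (Fin 7),
      (∀ C : Fin 7 → Option Bool, countType C true = 2 → countType C false = 4 →
          SW G C ≤ 65 / 12) ∧
      (∃ C : Fin 7 → Option Bool, countType C true = 2 ∧ countType C false = 4 ∧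
          SW G C = 65 / 12) ∧
      (∀ C : Fin 7 → Option Bool, countType C true = 2 → countType C false = 4 →
          IsEquil G C → SW G C ≤ 62 / 12) ∧
      (∃ C : Fin 7 → Option Bool, countType C true = 2 ∧ countType C false = 4 ∧
          IsEquil G C ∧ SW G C = 62 / 12) := by
  have h12 : (12 : ℕ) ≠ 0 := by norm_num
  have hdvd := dvd_twelve_of_le_posGraph_degree
  refine ⟨posGraph, ?_, ⟨posOptimum, ?_⟩, ?_, ⟨posBestEquilibrium, ?_⟩⟩ <;>
    simp only [countType_eq_card, SW_eq_sum_scaledUtil_div posGraph h12 hdvd,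
      isEquil_iff_isScaledEquil posGraph h12 hdvd, Nat.cast_ofNat,
      div_le_div_iff_of_pos_right (by norm_num : (0 : ℚ) < 12),
      div_left_inj' (by norm_num : (12 : ℚ) ≠ 0), Nat.cast_le_ofNat]
  exacts [posGraph_welfare_le, by exact_mod_cast posOptimum_spec,
    posGraph_equilibrium_welfare_le, by exact_mod_cast posBestEquilibrium_spec]
end
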